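/- Abstract scaling-breaking lemma: let n ≥ 1, α = 2(n+5)/(n+4), and let 𝓜, 𝓩, 𝓝 be nonnegative functions of a dyadic argument A = 2^k which are essentially non-increasing (𝓜(A) ≲ 𝓜(B) whenever B ≤ A, and similarly for 𝓩, 𝓝) and satisfy: (i) 𝓩(A) ≲ 𝓜(A) + 𝓝(A); (ii) 𝓜(A) + 𝓩(A) + 𝓝(A) ≲ 1; (iii) 𝓩(A) ≲ A^{−1/2} + 𝓝(A/2); (iv) for all sufficiently large A, 𝓝(A) ≲ 𝓩(A/8)^{1+8/n} + 𝓩(A/8)(Σ_{N≤A/8} (N/A)^{n²/(8(n+4))} 𝓩(N))^{8/n} + (Σ_{N≤A} (N/A)^{nα/(n+8)} 𝓩(N))^{(n+8)/n} + (Σ_{N≤A/8} (N/A) 𝓩(N))^{7/3}, where the sums run over dyadic N = 2^{−j}A, j ≥ 0; (v) 𝓜(A) + 𝓩(A) + 𝓝(A) → 0 as A → ∞. Then 𝓩(A) ≲ A^{−1/4} for all dyadic A. -/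

import Mathlib

open MeasureTheory Filter Topology ENNReal Real
open scoped FourierTransform RealInnerProductSpace

noncomputable section

namespace FourthNLS

/-- The spatial domain `ℝⁿ`. -/
abbrev Spc (n : ℕ) := EuclideanSpace ℝ (Fin n)

variable (n : ℕ)

/-- The linear propagator `e^{itΔ²} = 𝓕⁻¹ e^{it|ξ|⁴} 𝓕`. -/
def prop (t : ℝ) (f : Spc n → ℂ) : Spc n → ℂ :=
  𝓕⁻ (fun ξ : Spc n => Complex.exp (Complex.I * t * (‖ξ‖ : ℂ) ^ (4 : ℕ)) * 𝓕 f ξ)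

/-- The fractional derivative `|∇|^s` defined as the Fourier multiplier `‖ξ‖^s`. -/
def fracGrad (s : ℝ) (f : Spc n → ℂ) : Spc n → ℂ :=
  𝓕⁻ (fun ξ : Spc n => ((‖ξ‖ ^ s : ℝ) : ℂ) * 𝓕 f ξ)

/-- The mixed space-time norm `‖u‖_{L^p(I, L^q(ℝⁿ))}`. -/
def mixNorm (I : Set ℝ) (p q : ℝ≥0∞) (u : ℝ → Spc n → ℂ) : ℝ≥0∞ :=
  if p = ∞ then essSup (fun t => eLpNorm (u t) q volume) (volume.restrict I)
  else (∫⁻ t in I, (eLpNorm (u t) q volume) ^ p.toReal) ^ (1 / p.toReal)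

/-- The scattering exponent `2(n+4)/n`, as an extended nonnegative real. -/
def zExp : ℝ≥0∞ := (2 * ((n : ℝ≥0∞) + 4)) / (n : ℝ≥0∞)

/-- The `Z(I) = L^{2(n+4)/n}(I×ℝⁿ)` norm. -/
def Znorm (I : Set ℝ) (u : ℝ → Spc n → ℂ) : ℝ≥0∞ :=
  mixNorm n I (zExp n) (zExp n) u

/-- The dual Strichartz norm `‖u‖_{N(I)} = ‖|∇|^{-n/(n+4)}u‖_{L^{2(n+4)/(n+8)}(I,L^{2(n+4)/(n+6)})}`. -/
def Nnorm (I : Set ℝ) (u : ℝ → Spc n → ℂ) : ℝ≥0∞ :=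
  mixNorm n I ((2 * ((n : ℝ≥0∞) + 4)) / ((n : ℝ≥0∞) + 8))
    ((2 * ((n : ℝ≥0∞) + 4)) / ((n : ℝ≥0∞) + 6))
    (fun t => fracGrad n (-((n : ℝ) / ((n : ℝ) + 4))) (u t))

/-- `S`-admissible pairs: `2 ≤ p,q ≤ ∞`, `(p,q) ≠ (2,∞)` and `2/p + n/q = n/2`. -/
def SAdmissible (p q : ℝ≥0∞) : Prop :=
  2 ≤ p ∧ 2 ≤ q ∧ ¬(p = 2 ∧ q = ∞) ∧ 2 / p + (n : ℝ≥0∞) / q = (n : ℝ≥0∞) / 2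

/-- The Strichartz norm `‖u‖_{S⁰(I)} = sup over admissible (p,q) of ‖|∇|^{2/p}u‖_{L^p(I,L^q)}`. -/
def S0norm (I : Set ℝ) (u : ℝ → Spc n → ℂ) : ℝ≥0∞ :=
  ⨆ (p : ℝ≥0∞) (q : ℝ≥0∞) (_ : SAdmissible n p q),
    mixNorm n I p q (fun t => fracGrad n ((2 / p).toReal) (u t))

/-- The norm `‖u‖_{S^k(I)} = ‖|∇|^k u‖_{S⁰(I)}`. -/
def Sknorm (k : ℝ) (I : Set ℝ) (u : ℝ → Spc n → ℂ) : ℝ≥0∞ :=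
  S0norm n I (fun t => fracGrad n k (u t))

/-- The nonlinearity `F(z) = λ |z|^{8/n} z`. -/
def nonlin (lam : ℝ) (z : ℂ) : ℂ :=
  (lam : ℂ) * ((‖z‖ ^ ((8 : ℝ) / (n : ℝ)) : ℝ) : ℂ) * z

/-- A strong solution on `I`: `u ∈ S⁰_loc(I)` satisfying the Duhamel formula. -/
structure IsStrongSolution (lam : ℝ) (I : Set ℝ) (u : ℝ → Spc n → ℂ) : Prop where
  s0loc : ∀ J : Set ℝ, IsCompact J → J ⊆ I → S0norm n J u < ∞
  duhamel : ∀ t ∈ I, ∀ t₀ ∈ I, ∀ x : Spc n,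
    u t x = prop n (t - t₀) (u t₀) x
      + Complex.I * ∫ s in t₀..t, prop n (t - s) (fun y => nonlin n lam (u s y)) x

/-- A maximal-lifespan strong solution. -/
def IsMaximalSolution (lam : ℝ) (I : Set ℝ) (u : ℝ → Spc n → ℂ) : Prop :=
  IsStrongSolution n lam I u ∧
    ∀ (I' : Set ℝ) (u' : ℝ → Spc n → ℂ), IsStrongSolution n lam I' u' → I ⊆ I' →
      (∀ t ∈ I, ∀ x, u' t x = u t x) → I' = I

/-- The mass `M(f) = ∫ |f|²`. -/
def mass (f : Spc n → ℂ) : ℝ≥0∞ := ∫⁻ x, (‖f x‖₊ : ℝ≥0∞) ^ (2 : ℕ)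

/-- The Laplacian `Δf = ∑ᵢ ∂ᵢ²f`. -/
def lapl (f : Spc n → ℂ) : Spc n → ℂ := fun x =>
  ∑ i : Fin n, fderiv ℝ (fun y => fderiv ℝ f y (EuclideanSpace.single i 1)) x
    (EuclideanSpace.single i 1)

/-- The energy `E(u) = ½∫|Δu|² + (nλ/(2(n+4)))∫|u|^{2(n+4)/n}`. -/
def energy (lam : ℝ) (f : Spc n → ℂ) : ℝ :=
  (1 / 2) * ∫ x, ‖lapl n f x‖ ^ 2
    + ((n : ℝ) * lam / (2 * ((n : ℝ) + 4))) * ∫ x, ‖f x‖ ^ ((2 * ((n : ℝ) + 4)) / (n : ℝ))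

/-- The momentum `Mom(u) = Im ∫ u ∇ū`. -/
def momentum (f : Spc n → ℂ) : Spc n :=
  (EuclideanSpace.equiv (Fin n) ℝ).symm fun i =>
    (∫ x, f x * (starRingEnd ℂ) (fderiv ℝ f x (EuclideanSpace.single i 1))).im

/-- A ground state: a nonzero `L²` solution of `Δ²Q + Q = |Q|^{8/n}Q` of minimal mass. -/
def IsGroundState (Q : Spc n → ℂ) : Prop :=
  MemLp Q 2 volume ∧ ¬(Q =ᵐ[volume] (0 : Spc n → ℂ)) ∧
  (∀ x, lapl n (lapl n Q) x + Q x = ((‖Q x‖ ^ ((8 : ℝ) / (n : ℝ)) : ℝ) : ℂ) * Q x) ∧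
  ∀ R : Spc n → ℂ, MemLp R 2 volume → ¬(R =ᵐ[volume] (0 : Spc n → ℂ)) →
    (∀ x, lapl n (lapl n R) x + R x = ((‖R x‖ ^ ((8 : ℝ) / (n : ℝ)) : ℝ) : ℂ) * R x) →
    mass n Q ≤ mass n R

/-- The rescaling `g_{(h,x₀)}f(x) = h^{n/2} f(h(x - x₀))`. -/
def gTrans (h : ℝ) (x₀ : Spc n) (f : Spc n → ℂ) : Spc n → ℂ :=
  fun x => ((h ^ ((n : ℝ) / 2) : ℝ) : ℂ) * f (h • (x - x₀))

/-- The inverse rescaling `g_{(h,x₀)}⁻¹f(x) = h^{-n/2} f(h⁻¹ x + x₀)`. -/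
def gInv (h : ℝ) (x₀ : Spc n) (f : Spc n → ℂ) : Spc n → ℂ :=
  fun x => ((h ^ (-(n : ℝ) / 2) : ℝ) : ℂ) * f (h⁻¹ • x + x₀)

/-- The space-time symmetry `τ_{(h,t₀,x₀)}u(t,x) = h^{n/2} u(h⁴(t-t₀), h(x-x₀))`. -/
def tau (h t₀ : ℝ) (x₀ : Spc n) (u : ℝ → Spc n → ℂ) : ℝ → Spc n → ℂ :=
  fun t x => ((h ^ ((n : ℝ) / 2) : ℝ) : ℂ) * u (h ^ (4 : ℕ) * (t - t₀)) (h • (x - x₀))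

/-- Precompactness of a set of functions in `L²(ℝⁿ)` (total boundedness in the `L²` metric,
which is equivalent to precompactness since `L²` is complete). -/
def IsPrecompactL2 (S : Set (Spc n → ℂ)) : Prop :=
  (∀ f ∈ S, MemLp f 2 volume) ∧
  ∀ ε : ℝ≥0∞, 0 < ε → ∃ T : Finset (Spc n → ℂ),
    ∀ f ∈ S, ∃ g ∈ T, eLpNorm (fun x => f x - g x) 2 volume < ε

/-- Compactness modulo symmetries with parameters `N(t)` and `y(t)`. -/
def CompactModSym (I : Set ℝ) (u : ℝ → Spc n → ℂ) (N : ℝ → ℝ) (y : ℝ → Spc n) : Prop :=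
  (∀ t ∈ I, 0 < N t) ∧
  IsPrecompactL2 n {f | ∃ t ∈ I, f = gInv n (N t) (y t) (u t)}

/-- `f` is radially symmetric. -/
def IsRadial (f : Spc n → ℂ) : Prop := ∀ x y : Spc n, ‖x‖ = ‖y‖ → f x = f y

/-- `Λ(L)`: supremum of `‖u‖_{Z(I)}^{2(n+4)/n}` over all intervals and strong solutions of
mass `< L`. -/
def Lam (lam : ℝ) (L : ℝ≥0∞) : ℝ≥0∞ :=
  ⨆ (I : Set ℝ) (u : ℝ → Spc n → ℂ) (_ : IsStrongSolution n lam I u)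
    (_ : ∀ t ∈ I, mass n (u t) < L),
    Znorm n I u ^ ((2 * ((n : ℝ) + 4)) / (n : ℝ))

/-- `M_max = sup {M > 0 : Λ(M) < ∞}`. -/
def Mmax (lam : ℝ) : ℝ≥0∞ := sSup {M : ℝ≥0∞ | 0 < M ∧ Lam n lam M < ∞}

/-- The radial analogue of `Λ`. -/
def LamRad (lam : ℝ) (L : ℝ≥0∞) : ℝ≥0∞ :=
  ⨆ (I : Set ℝ) (u : ℝ → Spc n → ℂ) (_ : IsStrongSolution n lam I u)
    (_ : ∀ t, IsRadial n (u t)) (_ : ∀ t ∈ I, mass n (u t) < L),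
    Znorm n I u ^ ((2 * ((n : ℝ) + 4)) / (n : ℝ))

/-- `M^rad_max = sup {M > 0 : Λ^rad(M) < ∞}`. -/
def MmaxRad (lam : ℝ) : ℝ≥0∞ := sSup {M : ℝ≥0∞ | 0 < M ∧ LamRad n lam M < ∞}

/-- `u` scatters in `L²` forward and backward in time. -/
def Scatters (u : ℝ → Spc n → ℂ) : Prop :=
  ∃ ωp ωm : Spc n → ℂ, MemLp ωp 2 volume ∧ MemLp ωm 2 volume ∧
    Tendsto (fun t => eLpNorm (fun x => u t x - prop n t ωp x) 2 volume) atTop (𝓝 0) ∧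
    Tendsto (fun t => eLpNorm (fun x => u t x - prop n t ωm x) 2 volume) atBot (𝓝 0)

/-- `u ∈ C(ℝ, L²)`. -/
def ContL2 (u : ℝ → Spc n → ℂ) : Prop :=
  (∀ t, MemLp (u t) 2 volume) ∧
  ∀ t₀ : ℝ, ∀ ε : ℝ≥0∞, 0 < ε → ∃ δ : ℝ, 0 < δ ∧ ∀ t, |t - t₀| < δ →
    eLpNorm (fun x => u t x - u t₀ x) 2 volume < ε

/-- The Sobolev `H^s` norm, via the Fourier transform. -/
def hsNorm (s : ℝ) (f : Spc n → ℂ) : ℝ≥0∞ :=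
  eLpNorm (fun ξ : Spc n => (((1 + ‖ξ‖ ^ 2) ^ (s / 2) : ℝ) : ℂ) * 𝓕 f ξ) 2 volume

/-- `u ∈ C(ℝ, H^s)`. -/
def ContHs (s : ℝ) (u : ℝ → Spc n → ℂ) : Prop :=
  (∀ t, hsNorm n s (u t) < ∞) ∧
  ∀ t₀ : ℝ, ∀ ε : ℝ≥0∞, 0 < ε → ∃ δ : ℝ, 0 < δ ∧ ∀ t, |t - t₀| < δ →
    hsNorm n s (fun x => u t x - u t₀ x) < ε

/-- A Littlewood-Paley bump function: smooth, supported in `B(0,2)`, equal to `1` on `B(0,1)`. -/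
def IsLPBump (ψ : Spc n → ℝ) : Prop :=
  ContDiff ℝ (⊤ : ℕ∞) ψ ∧ tsupport ψ ⊆ Metric.closedBall 0 2 ∧ ∀ x : Spc n, ‖x‖ ≤ 1 → ψ x = 1

/-- The Littlewood-Paley projection `P_N` with symbol `ψ(ξ/N) - ψ(2ξ/N)`. -/
def LP (ψ : Spc n → ℝ) (N : ℝ) (f : Spc n → ℂ) : Spc n → ℂ :=
  𝓕⁻ (fun ξ : Spc n => ((ψ (N⁻¹ • ξ) - ψ ((2 * N⁻¹) • ξ) : ℝ) : ℂ) * 𝓕 f ξ)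

/-- Orthogonality of two scale-cores `(h_k, t_k, x_k)`. -/
def OrthoCores (c d : ℕ → ℝ × ℝ × Spc n) : Prop :=
  Tendsto (fun k => (c k).1 / (d k).1 + (d k).1 / (c k).1
    + (c k).1 ^ (4 : ℕ) * |(c k).2.1 - (d k).2.1|
    + (c k).1 * ‖(c k).2.2 - (d k).2.2‖) atTop atTop

/-- The localized virial action `A_R(t)` in the direction `e₁`. -/
def virialA (u : ℝ → Spc n → ℂ) (y : ℝ → Spc n) (e₁ : Spc n) (a : ℝ → ℝ)
    (R t : ℝ) : ℝ :=
  2 * (∫ x : Spc n, ((a (⟪x - y t, e₁⟫ / R) * ⟪x - y t, e₁⟫ : ℝ) : ℂ)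
        * fderiv ℝ (u t) x e₁ * (starRingEnd ℂ) (u t x)).im

/-- The dyadic sum `Σ_{N ≤ 2^{-j₀}A} (N/A)^θ 𝓩(N)` over dyadic `N = 2^{-j}A`, `j ≥ j₀`,
written with `A = 2^k`. -/
def dsum (θ : ℝ) (Z : ℤ → ℝ) (k : ℤ) (j₀ : ℕ) : ℝ :=
  ∑' i : ℕ, (2 : ℝ) ^ (-(((i : ℝ) + (j₀ : ℝ)) * θ)) * Z (k - ((i : ℤ) + (j₀ : ℤ)))

/-- The right-hand side of the nonlinear estimate (4.9), with `A = 2^k`, `α = 2(n+5)/(n+4)`. -/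
def nlRHS (n : ℕ) (Z : ℤ → ℝ) (k : ℤ) : ℝ :=
  Z (k - 3) ^ (1 + (8 : ℝ) / (n : ℝ))
    + Z (k - 3) * dsum ((n : ℝ) ^ 2 / (8 * ((n : ℝ) + 4))) Z k 3 ^ ((8 : ℝ) / (n : ℝ))
    + dsum ((n : ℝ) * (2 * ((n : ℝ) + 5) / ((n : ℝ) + 4)) / ((n : ℝ) + 8)) Z k 0
        ^ (((n : ℝ) + 8) / (n : ℝ))
    + dsum 1 Z k 3 ^ ((7 : ℝ) / 3)

private lemma two_rpow_pos (x : ℝ) : (0:ℝ) < (2:ℝ) ^ x := Real.rpow_pos_of_pos two_pos x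

private lemma geom_term_eq (a c : ℝ) (i : ℕ) :
    (2:ℝ) ^ (-(((i:ℝ) + c) * a)) = (2:ℝ) ^ (-(c*a)) * ((2:ℝ) ^ (-a)) ^ i := by
  rw [← Real.rpow_natCast ((2:ℝ) ^ (-a)) i, ← Real.rpow_mul (by norm_num),
    ← Real.rpow_add two_pos]
  congr 1; ring

private lemma geom_summable (a : ℝ) (ha : 0 < a) (c : ℝ) :
    Summable (fun i : ℕ => (2:ℝ) ^ (-(((i:ℝ) + c) * a))) := by
  have h1 : (2:ℝ) ^ (-a) < 1 := Real.rpow_lt_one_of_one_lt_of_neg one_lt_two (by linarith)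
  have h0 : (0:ℝ) ≤ (2:ℝ) ^ (-a) := (two_rpow_pos _).le
  exact ((summable_geometric_of_lt_one h0 h1).mul_left ((2:ℝ) ^ (-(c*a)))).congr
    (fun i => (geom_term_eq a c i).symm)

private lemma geom_tsum_le (a : ℝ) (ha : 0 < a) (c : ℝ) (hc : 0 ≤ c) :
    ∑' i : ℕ, (2:ℝ) ^ (-(((i:ℝ) + c) * a)) ≤ (1 - (2:ℝ) ^ (-a))⁻¹ := by
  have h1 : (2:ℝ) ^ (-a) < 1 := Real.rpow_lt_one_of_one_lt_of_neg one_lt_two (by linarith)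
  have h0 : (0:ℝ) ≤ (2:ℝ) ^ (-a) := (two_rpow_pos _).le
  have hinv : (0:ℝ) ≤ (1 - (2:ℝ) ^ (-a))⁻¹ := by
    rw [inv_nonneg]; linarith
  calc ∑' i : ℕ, (2:ℝ) ^ (-(((i:ℝ) + c) * a))
      = (2:ℝ) ^ (-(c*a)) * (1 - (2:ℝ) ^ (-a))⁻¹ := by
        rw [tsum_congr (fun i => geom_term_eq a c i), tsum_mul_left,
          tsum_geometric_of_lt_one h0 h1]
    _ ≤ 1 * (1 - (2:ℝ) ^ (-a))⁻¹ := by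
        refine mul_le_mul_of_nonneg_right ?_ hinv
        exact Real.rpow_le_one_of_one_le_of_nonpos one_le_two (by nlinarith)
    _ = _ := one_mul _

private lemma ginv_pos {a : ℝ} (ha : 0 < a) : (0:ℝ) < (1 - (2:ℝ) ^ (-a))⁻¹ := by
  have h1 : (2:ℝ) ^ (-a) < 1 := Real.rpow_lt_one_of_one_lt_of_neg one_lt_two (by linarith)
  exact inv_pos.mpr (by linarith)

private lemma dsum_nonneg {Z : ℤ → ℝ} (hZ : ∀ j, 0 ≤ Z j) (θ : ℝ) (k : ℤ) (j₀ : ℕ) :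
    0 ≤ dsum θ Z k j₀ :=
  tsum_nonneg fun i => mul_nonneg (two_rpow_pos _).le (hZ _)

private lemma dsum_le_small {θ cb η : ℝ} {Z : ℤ → ℝ} (hθ : 0 < θ)
    (hZ0 : ∀ j, 0 ≤ Z j) (hZb : ∀ j, Z j ≤ cb) (hcb : 0 ≤ cb) (hη : 0 ≤ η)
    {Kη : ℤ} (hZη : ∀ j, Kη ≤ j → Z j ≤ η) (m : ℤ) (j₀ : ℕ) :
    dsum θ Z m j₀ ≤ η * (1 - (2:ℝ) ^ (-θ))⁻¹
      + cb * (2:ℝ) ^ (-(((m:ℝ) - (Kη:ℝ)) * (θ/2))) * (1 - (2:ℝ) ^ (-(θ/2)))⁻¹ := by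
  set X : ℝ := (2:ℝ) ^ (-(((m:ℝ) - (Kη:ℝ)) * (θ/2))) with hX
  have hXpos : 0 < X := two_rpow_pos _
  set g : ℕ → ℝ := fun i => η * (2:ℝ) ^ (-(((i:ℝ) + (j₀:ℝ)) * θ))
      + (cb * X) * (2:ℝ) ^ (-(((i:ℝ) + (j₀:ℝ)) * (θ/2))) with hg
  have hpt : ∀ i : ℕ, (2:ℝ) ^ (-(((i:ℝ) + (j₀:ℝ)) * θ)) * Z (m - ((i:ℤ) + (j₀:ℤ))) ≤ g i := by
    intro i
    by_cases h : Kη ≤ m - ((i:ℤ) + (j₀:ℤ))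
    · have h1 : (2:ℝ) ^ (-(((i:ℝ) + (j₀:ℝ)) * θ)) * Z (m - ((i:ℤ) + (j₀:ℤ)))
          ≤ (2:ℝ) ^ (-(((i:ℝ) + (j₀:ℝ)) * θ)) * η :=
        mul_le_mul_of_nonneg_left (hZη _ h) (two_rpow_pos _).le
      have h2 : 0 ≤ (cb * X) * (2:ℝ) ^ (-(((i:ℝ) + (j₀:ℝ)) * (θ/2))) := by positivity
      rw [hg]; dsimp only; nlinarith [h1, h2]
    · push_neg at h
      have hij : (m:ℝ) - (Kη:ℝ) ≤ (i:ℝ) + (j₀:ℝ) := by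
        have : m - Kη ≤ (i:ℤ) + (j₀:ℤ) := by omega
        exact_mod_cast this
    -- 2^{-((i+j₀)θ)} = 2^{-((i+j₀)θ/2)} * 2^{-((i+j₀)θ/2)} ≤ X * 2^{-((i+j₀)θ/2)}
      have hsplit : (2:ℝ) ^ (-(((i:ℝ) + (j₀:ℝ)) * θ))
          = (2:ℝ) ^ (-(((i:ℝ) + (j₀:ℝ)) * (θ/2))) * (2:ℝ) ^ (-(((i:ℝ) + (j₀:ℝ)) * (θ/2))) := by
        rw [← Real.rpow_add two_pos]; congr 1; ring
      have hle : (2:ℝ) ^ (-(((i:ℝ) + (j₀:ℝ)) * (θ/2))) ≤ X := by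
        rw [hX]
        exact (Real.rpow_le_rpow_left_iff one_lt_two).mpr (by nlinarith)
      have h1 : (2:ℝ) ^ (-(((i:ℝ) + (j₀:ℝ)) * θ)) * Z (m - ((i:ℤ) + (j₀:ℤ)))
          ≤ (2:ℝ) ^ (-(((i:ℝ) + (j₀:ℝ)) * θ)) * cb :=
        mul_le_mul_of_nonneg_left (hZb _) (two_rpow_pos _).le
      have h2 : (2:ℝ) ^ (-(((i:ℝ) + (j₀:ℝ)) * θ)) * cb
          ≤ (cb * X) * (2:ℝ) ^ (-(((i:ℝ) + (j₀:ℝ)) * (θ/2))) := by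
        rw [hsplit]
        have := mul_le_mul_of_nonneg_right hle (two_rpow_pos (-(((i:ℝ) + (j₀:ℝ)) * (θ/2)))).le
        nlinarith [this, hcb, (two_rpow_pos (-(((i:ℝ) + (j₀:ℝ)) * (θ/2)))).le]
      have h3 : 0 ≤ η * (2:ℝ) ^ (-(((i:ℝ) + (j₀:ℝ)) * θ)) := by positivity
      rw [hg]; dsimp only; nlinarith [h1.trans h2, h3]
  have hgsum : Summable g := by
    exact ((geom_summable θ hθ (j₀:ℝ)).mul_left η).add
      (((geom_summable (θ/2) (by linarith) (j₀:ℝ)).mul_left (cb * X)))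
  have hfsum : Summable (fun i : ℕ =>
      (2:ℝ) ^ (-(((i:ℝ) + (j₀:ℝ)) * θ)) * Z (m - ((i:ℤ) + (j₀:ℤ)))) :=
    Summable.of_nonneg_of_le (fun i => mul_nonneg (two_rpow_pos _).le (hZ0 _)) hpt hgsum
  have h4 : dsum θ Z m j₀ ≤ ∑' i, g i := Summable.tsum_le_tsum hpt hfsum hgsum
  have h5 : ∑' i, g i = η * (∑' i : ℕ, (2:ℝ) ^ (-(((i:ℝ) + (j₀:ℝ)) * θ)))
      + (cb * X) * (∑' i : ℕ, (2:ℝ) ^ (-(((i:ℝ) + (j₀:ℝ)) * (θ/2)))) := by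
    rw [hg, Summable.tsum_add ((geom_summable θ hθ (j₀:ℝ)).mul_left η)
      ((geom_summable (θ/2) (by linarith) (j₀:ℝ)).mul_left (cb * X)),
      tsum_mul_left, tsum_mul_left]
  have h6 := geom_tsum_le θ hθ (j₀:ℝ) (by positivity)
  have h7 := geom_tsum_le (θ/2) (by linarith) (j₀:ℝ) (by positivity)
  have h8 : 0 ≤ ∑' i : ℕ, (2:ℝ) ^ (-(((i:ℝ) + (j₀:ℝ)) * θ)) :=
    tsum_nonneg fun i => (two_rpow_pos _).le
  calc dsum θ Z m j₀ ≤ ∑' i, g i := h4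
    _ ≤ η * (1 - (2:ℝ) ^ (-θ))⁻¹ + (cb * X) * (1 - (2:ℝ) ^ (-(θ/2)))⁻¹ := by
        rw [h5]
        have := mul_le_mul_of_nonneg_left h6 hη
        have := mul_le_mul_of_nonneg_left h7 (by positivity : (0:ℝ) ≤ cb * X)
        linarith
    _ = _ := by ring

private lemma dsum_le_decay {θ C : ℝ} {Z : ℤ → ℝ} (hθ : 1/4 < θ) (hC : 0 ≤ C)
    (hZ0 : ∀ j, 0 ≤ Z j) {m : ℤ} (hIH : ∀ j : ℤ, j ≤ m → Z j ≤ C * (2:ℝ) ^ (-(j:ℝ)/4))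
    (j₀ : ℕ) :
    dsum θ Z m j₀ ≤ C * (2:ℝ) ^ (-(m:ℝ)/4) * (1 - (2:ℝ) ^ (-(θ - 1/4)))⁻¹ := by
  set Y : ℝ := C * (2:ℝ) ^ (-(m:ℝ)/4) with hY
  have hYnn : 0 ≤ Y := by positivity
  set g : ℕ → ℝ := fun i => Y * (2:ℝ) ^ (-(((i:ℝ) + (j₀:ℝ)) * (θ - 1/4))) with hg
  have hpt : ∀ i : ℕ, (2:ℝ) ^ (-(((i:ℝ) + (j₀:ℝ)) * θ)) * Z (m - ((i:ℤ) + (j₀:ℤ))) ≤ g i := by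
    intro i
    have h1 : Z (m - ((i:ℤ) + (j₀:ℤ))) ≤ C * (2:ℝ) ^ (-((m - ((i:ℤ) + (j₀:ℤ)) : ℤ):ℝ)/4) :=
      hIH _ (by omega)
    have hcast : ((m - ((i:ℤ) + (j₀:ℤ)) : ℤ):ℝ) = (m:ℝ) - ((i:ℝ) + (j₀:ℝ)) := by push_cast; ring
    rw [hcast] at h1
    have h2 : (2:ℝ) ^ (-(((i:ℝ) + (j₀:ℝ)) * θ)) * (2:ℝ) ^ (-((m:ℝ) - ((i:ℝ) + (j₀:ℝ)))/4)
        = (2:ℝ) ^ (-(m:ℝ)/4) * (2:ℝ) ^ (-(((i:ℝ) + (j₀:ℝ)) * (θ - 1/4))) := by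
      rw [← Real.rpow_add two_pos, ← Real.rpow_add two_pos]; congr 1; ring
    have h3 : (2:ℝ) ^ (-(((i:ℝ) + (j₀:ℝ)) * θ)) * Z (m - ((i:ℤ) + (j₀:ℤ)))
        ≤ (2:ℝ) ^ (-(((i:ℝ) + (j₀:ℝ)) * θ)) * (C * (2:ℝ) ^ (-((m:ℝ) - ((i:ℝ) + (j₀:ℝ)))/4)) :=
      mul_le_mul_of_nonneg_left h1 (two_rpow_pos _).le
    calc (2:ℝ) ^ (-(((i:ℝ) + (j₀:ℝ)) * θ)) * Z (m - ((i:ℤ) + (j₀:ℤ)))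
        ≤ (2:ℝ) ^ (-(((i:ℝ) + (j₀:ℝ)) * θ)) * (C * (2:ℝ) ^ (-((m:ℝ) - ((i:ℝ) + (j₀:ℝ)))/4)) := h3
      _ = C * ((2:ℝ) ^ (-(((i:ℝ) + (j₀:ℝ)) * θ)) * (2:ℝ) ^ (-((m:ℝ) - ((i:ℝ) + (j₀:ℝ)))/4)) := by
          ring
      _ = g i := by rw [h2, hg]; dsimp only; rw [hY]; ring
  have hgsum : Summable g := (geom_summable (θ - 1/4) (by linarith) (j₀:ℝ)).mul_left Y
  have hfsum : Summable (fun i : ℕ =>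
      (2:ℝ) ^ (-(((i:ℝ) + (j₀:ℝ)) * θ)) * Z (m - ((i:ℤ) + (j₀:ℤ)))) :=
    Summable.of_nonneg_of_le (fun i => mul_nonneg (two_rpow_pos _).le (hZ0 _)) hpt hgsum
  calc dsum θ Z m j₀ ≤ ∑' i, g i := Summable.tsum_le_tsum hpt hfsum hgsum
    _ = Y * ∑' i : ℕ, (2:ℝ) ^ (-(((i:ℝ) + (j₀:ℝ)) * (θ - 1/4))) := by
        rw [hg, tsum_mul_left]
    _ ≤ Y * (1 - (2:ℝ) ^ (-(θ - 1/4)))⁻¹ :=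
        mul_le_mul_of_nonneg_left (geom_tsum_le (θ - 1/4) (by linarith) (j₀:ℝ) (by positivity)) hYnn

private lemma rpow_one_add_le {x a b p : ℝ} (hx : 0 ≤ x) (hxa : x ≤ a) (hxb : x ≤ b) (hp : 0 ≤ p) :
    x ^ (1 + p) ≤ a ^ p * b := by
  rw [Real.rpow_add' hx (by positivity), Real.rpow_one]
  calc x * x ^ p ≤ b * a ^ p :=
        mul_le_mul hxb (Real.rpow_le_rpow hx hxa hp) (Real.rpow_nonneg hx p) (hx.trans hxb)
    _ = a ^ p * b := mul_comm _ _

private lemma exists_tail (cb g η a : ℝ) (hc : 0 < cb) (hg : 0 < g) (hη : 0 < η) (ha : 0 < a) :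
    ∃ T : ℤ, ∀ s : ℝ, (T:ℝ) ≤ s → cb * (2:ℝ) ^ (-(s * a)) * g ≤ η := by
  set r := η / (cb * g) with hr
  have hrpos : 0 < r := by positivity
  refine ⟨⌈Real.logb 2 r⁻¹ / a⌉, fun s hs => ?_⟩
  have h0 : Real.logb 2 r⁻¹ / a ≤ s := le_trans (Int.le_ceil _) hs
  rw [div_le_iff₀ ha, Real.logb_inv] at h0
  have h2 : -(s * a) ≤ Real.logb 2 r := by linarith
  have h1 : (2:ℝ) ^ (-(s * a)) ≤ r :=
    calc (2:ℝ) ^ (-(s * a)) ≤ (2:ℝ) ^ (Real.logb 2 r) :=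
          (Real.rpow_le_rpow_left_iff one_lt_two).mpr h2
      _ = r := Real.rpow_logb two_pos (by norm_num) hrpos
  calc cb * (2:ℝ) ^ (-(s * a)) * g ≤ cb * r * g :=
        mul_le_mul_of_nonneg_right (mul_le_mul_of_nonneg_left h1 hc.le) hg.le
    _ = η := by rw [hr]; field_simp
private lemma exists_eta (A B p q : ℝ) (hA : 0 < A) (hB : 0 < B) (hp : 0 < p) (hq : 0 < q) :
    ∃ η : ℝ, 0 < η ∧ A * (B * η) ^ p ≤ q := by
  refine ⟨B⁻¹ * (q / A) ^ p⁻¹, by positivity, ?_⟩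
  have h1 : B * (B⁻¹ * (q / A) ^ p⁻¹) = (q / A) ^ p⁻¹ := by field_simp
  rw [h1, ← Real.rpow_mul (by positivity), inv_mul_cancel₀ hp.ne', Real.rpow_one,
    mul_div_cancel₀ _ hA.ne']

private lemma eta_mono {A B p q η η' : ℝ} (hA : 0 ≤ A) (hB : 0 ≤ B) (hp : 0 ≤ p) (hη : 0 ≤ η)
    (hle : η ≤ η') (h : A * (B * η') ^ p ≤ q) : A * (B * η) ^ p ≤ q :=
  le_trans (mul_le_mul_of_nonneg_left
    (Real.rpow_le_rpow (by positivity) (mul_le_mul_of_nonneg_left hle hB) hp) hA) h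


set_option maxHeartbeats 1000000 in
/-- **Lemma (breaking the scaling).** Nonnegative, essentially non-increasing dyadic functions
`𝓜, 𝓩, 𝓝` (argument `A = 2^k`) satisfying the Strichartz bound, boundedness, the linear-term
vanishing `𝓩(A) ≲ A^{-1/2} + 𝓝(A/2)`, the nonlinear estimate for large `A`, and decay at
infinity, obey `𝓩(A) ≲ A^{-1/4}`. -/
theorem scaling_breaking (n : ℕ) (hn : 1 ≤ n) (M Z N : ℤ → ℝ)
    (hMnn : ∀ k, 0 ≤ M k) (hZnn : ∀ k, 0 ≤ Z k) (hNnn : ∀ k, 0 ≤ N k)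
    (hmono : ∃ c : ℝ, 0 < c ∧ ∀ j k : ℤ, j ≤ k →
      M k ≤ c * M j ∧ Z k ≤ c * Z j ∧ N k ≤ c * N j)
    (hStrich : ∃ c : ℝ, 0 < c ∧ ∀ k : ℤ, Z k ≤ c * (M k + N k))
    (hbdd : ∃ c : ℝ, 0 < c ∧ ∀ k : ℤ, M k + Z k + N k ≤ c)
    (hlin : ∃ c : ℝ, 0 < c ∧ ∀ k : ℤ, Z k ≤ c * ((2 : ℝ) ^ (-(k : ℝ) / 2) + N (k - 1)))
    (hNL : ∃ c : ℝ, 0 < c ∧ ∃ K : ℤ, ∀ k : ℤ, K ≤ k → N k ≤ c * nlRHS n Z k)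
    (hdecay : Tendsto (fun k : ℤ => M k + Z k + N k) atTop (𝓝 0)) :
    ∃ C : ℝ, 0 < C ∧ ∀ k : ℤ, Z k ≤ C * (2 : ℝ) ^ (-(k : ℝ) / 4) := by
  obtain ⟨cb, hcb, hbddf⟩ := hbdd
  obtain ⟨cl, hcl, hlinf⟩ := hlin
  obtain ⟨cn, hcn, K, hNLf⟩ := hNL
  have hn1 : (1:ℝ) ≤ (n:ℝ) := by exact_mod_cast hn
  have hnpos : (0:ℝ) < (n:ℝ) := by linarith
  set θ₁ : ℝ := (n:ℝ)^2 / (8 * ((n:ℝ)+4)) with hθ₁def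
  set θ₂ : ℝ := (n:ℝ) * (2 * ((n:ℝ)+5) / ((n:ℝ)+4)) / ((n:ℝ)+8) with hθ₂def
  have hθ₁pos : 0 < θ₁ := by rw [hθ₁def]; positivity
  have hθ₂eq : θ₂ = 2*(n:ℝ)*((n:ℝ)+5) / (((n:ℝ)+4)*((n:ℝ)+8)) := by
    rw [hθ₂def]; field_simp
  have hθ₂gt : 1/4 < θ₂ := by
    rw [hθ₂eq, lt_div_iff₀ (by positivity)]
    nlinarith [sq_nonneg ((n:ℝ) - 1)]
  have hθ₂pos : 0 < θ₂ := lt_trans (by norm_num) hθ₂gt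
  have hppos : 0 < (8:ℝ)/(n:ℝ) := by positivity
  have hZb : ∀ k, Z k ≤ cb := fun k => by
    have := hbddf k; have := hMnn k; have := hNnn k; linarith
  set q : ℝ := 1 / (16 * cl * cn) with hqdef
  have hq : 0 < q := by rw [hqdef]; positivity
  have hg1 : 0 < (1 - (2:ℝ)^(-θ₁))⁻¹ := ginv_pos hθ₁pos
  have hg2 : 0 < (1 - (2:ℝ)^(-θ₂))⁻¹ := ginv_pos hθ₂pos
  have hg3 : 0 < (1 - (2:ℝ)^(-(1:ℝ)))⁻¹ := ginv_pos one_pos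
  have hA3 : 0 < (1 - (2:ℝ)^(-(θ₂ - 1/4)))⁻¹ := ginv_pos (by linarith)
  have hA4 : 0 < (1 - (2:ℝ)^(-((1:ℝ) - 1/4)))⁻¹ := ginv_pos (by norm_num)
  have hc34 : 0 < (2:ℝ)^((3:ℝ)/4) := two_rpow_pos _
  obtain ⟨ηa, hηa, hqa⟩ := exists_eta ((2:ℝ)^((3:ℝ)/4)) 1 ((8:ℝ)/(n:ℝ)) q hc34 one_pos hppos hq
  obtain ⟨ηb, hηb, hqb⟩ := exists_eta ((2:ℝ)^((3:ℝ)/4)) ((1 - (2:ℝ)^(-θ₁))⁻¹ + 1)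
    ((8:ℝ)/(n:ℝ)) q hc34 (by linarith) hppos hq
  obtain ⟨ηc, hηc, hqc⟩ := exists_eta ((1 - (2:ℝ)^(-(θ₂ - 1/4)))⁻¹) ((1 - (2:ℝ)^(-θ₂))⁻¹ + 1)
    ((8:ℝ)/(n:ℝ)) q hA3 (by linarith) hppos hq
  obtain ⟨ηd, hηd, hqd⟩ := exists_eta ((1 - (2:ℝ)^(-((1:ℝ) - 1/4)))⁻¹) ((1 - (2:ℝ)^(-(1:ℝ)))⁻¹ + 1)
    ((4:ℝ)/3) q hA4 (by linarith) (by norm_num) hq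
  set η : ℝ := min (min ηa ηb) (min ηc ηd) with hηdef
  have hη : 0 < η := lt_min (lt_min hηa hηb) (lt_min hηc hηd)
  have hqa' : (2:ℝ)^((3:ℝ)/4) * (1 * η) ^ ((8:ℝ)/(n:ℝ)) ≤ q :=
    eta_mono hc34.le zero_le_one hppos.le hη.le ((min_le_left _ _).trans (min_le_left _ _)) hqa
  have hqb' : (2:ℝ)^((3:ℝ)/4) * (((1 - (2:ℝ)^(-θ₁))⁻¹ + 1) * η) ^ ((8:ℝ)/(n:ℝ)) ≤ q :=
    eta_mono hc34.le (by linarith) hppos.le hη.le ((min_le_left _ _).trans (min_le_right _ _)) hqb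
  have hqc' : (1 - (2:ℝ)^(-(θ₂ - 1/4)))⁻¹ * (((1 - (2:ℝ)^(-θ₂))⁻¹ + 1) * η) ^ ((8:ℝ)/(n:ℝ)) ≤ q :=
    eta_mono hA3.le (by linarith) hppos.le hη.le ((min_le_right _ _).trans (min_le_left _ _)) hqc
  have hqd' : (1 - (2:ℝ)^(-((1:ℝ) - 1/4)))⁻¹ * (((1 - (2:ℝ)^(-(1:ℝ)))⁻¹ + 1) * η) ^ ((4:ℝ)/3) ≤ q :=
    eta_mono hA4.le (by linarith) (by norm_num) hη.le ((min_le_right _ _).trans (min_le_right _ _)) hqd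
  obtain ⟨Kη, hKη⟩ := (eventually_atTop).mp (hdecay.eventually_lt_const hη)
  have hZη : ∀ j, Kη ≤ j → Z j ≤ η := fun j hj => by
    have := hKη j hj; have := hMnn j; have := hNnn j; linarith
  obtain ⟨T1, hT1⟩ := exists_tail cb ((1 - (2:ℝ)^(-(θ₁/2)))⁻¹) η (θ₁/2) hcb
    (ginv_pos (by linarith)) hη (by linarith)
  obtain ⟨T2, hT2⟩ := exists_tail cb ((1 - (2:ℝ)^(-(θ₂/2)))⁻¹) η (θ₂/2) hcb
    (ginv_pos (by linarith)) hη (by linarith)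
  obtain ⟨T3, hT3⟩ := exists_tail cb ((1 - (2:ℝ)^(-((1:ℝ)/2)))⁻¹) η ((1:ℝ)/2) hcb
    (ginv_pos (by norm_num)) hη (by norm_num)
  have Dsmall : ∀ θ : ℝ, 0 < θ → ∀ T : ℤ,
      (∀ s : ℝ, (T:ℝ) ≤ s → cb * (2:ℝ)^(-(s*(θ/2))) * (1 - (2:ℝ)^(-(θ/2)))⁻¹ ≤ η) →
      ∀ j₀ : ℕ, ∀ m : ℤ, Kη + T ≤ m →
      dsum θ Z m j₀ ≤ ((1 - (2:ℝ)^(-θ))⁻¹ + 1) * η := by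
    intro θ hθ T hT j₀ m hm
    have h := dsum_le_small hθ hZnn hZb hcb.le hη.le hZη m j₀
    have h2 := hT ((m:ℝ) - (Kη:ℝ)) (by
      have h3 : (T:ℤ) ≤ m - Kη := by omega
      exact_mod_cast h3)
    calc dsum θ Z m j₀ ≤ _ := h
      _ ≤ η * (1 - (2:ℝ)^(-θ))⁻¹ + η := by linarith
      _ = ((1 - (2:ℝ)^(-θ))⁻¹ + 1) * η := by ring
  set K₁ : ℤ := max (max K (Kη + 3)) (max (max (Kη + T1) (Kη + T2)) (max (Kη + T3) 1)) with hK₁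
  have hKK₁ : K ≤ K₁ := le_trans (le_max_left _ _) (le_max_left _ _)
  have hKη3 : Kη + 3 ≤ K₁ := le_trans (le_max_right _ _) (le_max_left _ _)
  have hT1K₁ : Kη + T1 ≤ K₁ := le_trans (le_trans (le_max_left _ _) (le_max_left _ _)) (le_max_right _ _)
  have hT2K₁ : Kη + T2 ≤ K₁ := le_trans (le_trans (le_max_right _ _) (le_max_left _ _)) (le_max_right _ _)
  have hT3K₁ : Kη + T3 ≤ K₁ := le_trans (le_trans (le_max_left _ _) (le_max_right _ _)) (le_max_right _ _)
  have hK₁1 : (1:ℤ) ≤ K₁ := le_trans (le_trans (le_max_right _ _) (le_max_right _ _)) (le_max_right _ _)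
  set C : ℝ := max (cb * (2:ℝ)^((K₁:ℝ)/4)) (2*cl) with hCdef
  have hCpos : 0 < C := lt_max_of_lt_right (by linarith)
  have hbase : ∀ j : ℤ, j ≤ K₁ → Z j ≤ C * (2:ℝ)^(-(j:ℝ)/4) := by
    intro j hj
    have h1 : (2:ℝ)^(-(K₁:ℝ)/4) ≤ (2:ℝ)^(-(j:ℝ)/4) := by
      apply (Real.rpow_le_rpow_left_iff one_lt_two).mpr
      have : (j:ℝ) ≤ (K₁:ℝ) := by exact_mod_cast hj
      linarith
    have h2 : cb = cb * (2:ℝ)^((K₁:ℝ)/4) * (2:ℝ)^(-(K₁:ℝ)/4) := by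
      rw [mul_assoc, ← Real.rpow_add two_pos]
      have : (K₁:ℝ)/4 + -(K₁:ℝ)/4 = 0 := by ring
      rw [this, Real.rpow_zero, mul_one]
    calc Z j ≤ cb := hZb j
      _ = cb * (2:ℝ)^((K₁:ℝ)/4) * (2:ℝ)^(-(K₁:ℝ)/4) := h2
      _ ≤ cb * (2:ℝ)^((K₁:ℝ)/4) * (2:ℝ)^(-(j:ℝ)/4) :=
          mul_le_mul_of_nonneg_left h1 (by positivity)
      _ ≤ C * (2:ℝ)^(-(j:ℝ)/4) :=
          mul_le_mul_of_nonneg_right (le_max_left _ _) (two_rpow_pos _).le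
  have hstep : ∀ k : ℤ, K₁ + 1 ≤ k →
      (∀ j : ℤ, j ≤ k - 1 → Z j ≤ C * (2:ℝ)^(-(j:ℝ)/4)) → Z k ≤ C * (2:ℝ)^(-(k:ℝ)/4) := by
    intro k hk hIH
    set m : ℤ := k - 1 with hm
    have hmK₁ : K₁ ≤ m := by omega
    have hIH' : ∀ j : ℤ, j ≤ m → Z j ≤ C * (2:ℝ)^(-(j:ℝ)/4) := fun j hj => hIH j (by omega)
    set W : ℝ := C * (2:ℝ)^(-(m:ℝ)/4) with hWdef
    have hWnn : 0 ≤ W := by positivity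
    have hD1s := Dsmall θ₁ hθ₁pos T1 hT1 3 m (by omega)
    have hD2s := Dsmall θ₂ hθ₂pos T2 hT2 0 m (by omega)
    have hD3s := Dsmall 1 one_pos T3 hT3 3 m (by omega)
    have hD2d := dsum_le_decay hθ₂gt hCpos.le hZnn hIH' 0
    have hD3d := dsum_le_decay (by norm_num : (1:ℝ)/4 < 1) hCpos.le hZnn hIH' 3
    have hZm3η : Z (m - 3) ≤ η := hZη _ (by omega)
    have hsplit3 : C * (2:ℝ)^(-((m:ℝ)-3)/4) = (2:ℝ)^((3:ℝ)/4) * W := by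
      have h0 : (2:ℝ)^(-((m:ℝ)-3)/4) = (2:ℝ)^((3:ℝ)/4) * (2:ℝ)^(-(m:ℝ)/4) := by
        rw [← Real.rpow_add two_pos]; congr 1; ring
      rw [hWdef, h0]; ring
    have hZm3C : Z (m - 3) ≤ (2:ℝ)^((3:ℝ)/4) * W := by
      have h0 := hIH' (m-3) (by omega)
      have hc : ((m - 3 : ℤ):ℝ) = (m:ℝ) - 3 := by push_cast; ring
      rw [hc] at h0
      exact h0.trans_eq hsplit3
    -- term 1
    have hT1f : Z (m-3) ^ (1 + (8:ℝ)/(n:ℝ)) ≤ q * W := by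
      have h1 : Z (m-3) ^ (1 + (8:ℝ)/(n:ℝ)) ≤ (1 * η)^((8:ℝ)/(n:ℝ)) * ((2:ℝ)^((3:ℝ)/4) * W) :=
        rpow_one_add_le (hZnn _) (by rw [one_mul]; exact hZm3η) hZm3C hppos.le
      calc Z (m-3) ^ (1 + (8:ℝ)/(n:ℝ)) ≤ (1 * η)^((8:ℝ)/(n:ℝ)) * ((2:ℝ)^((3:ℝ)/4) * W) := h1
        _ = ((2:ℝ)^((3:ℝ)/4) * (1 * η)^((8:ℝ)/(n:ℝ))) * W := by ring
        _ ≤ q * W := mul_le_mul_of_nonneg_right hqa' hWnn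
    -- term 2
    have hD1nn := dsum_nonneg hZnn θ₁ m 3
    have hT2f : Z (m-3) * dsum θ₁ Z m 3 ^ ((8:ℝ)/(n:ℝ)) ≤ q * W := by
      have h1 : dsum θ₁ Z m 3 ^ ((8:ℝ)/(n:ℝ)) ≤ (((1 - (2:ℝ)^(-θ₁))⁻¹ + 1) * η)^((8:ℝ)/(n:ℝ)) :=
        Real.rpow_le_rpow hD1nn hD1s hppos.le
      calc Z (m-3) * dsum θ₁ Z m 3 ^ ((8:ℝ)/(n:ℝ))
          ≤ ((2:ℝ)^((3:ℝ)/4) * W) * ((((1 - (2:ℝ)^(-θ₁))⁻¹ + 1) * η)^((8:ℝ)/(n:ℝ))) :=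
            mul_le_mul hZm3C h1 (Real.rpow_nonneg hD1nn _) (by positivity)
        _ = ((2:ℝ)^((3:ℝ)/4) * (((1 - (2:ℝ)^(-θ₁))⁻¹ + 1) * η)^((8:ℝ)/(n:ℝ))) * W := by ring
        _ ≤ q * W := mul_le_mul_of_nonneg_right hqb' hWnn
    -- term 3
    have hD2nn := dsum_nonneg hZnn θ₂ m 0
    have hT3f : dsum θ₂ Z m 0 ^ (1 + (8:ℝ)/(n:ℝ)) ≤ q * W := by
      have h1 : dsum θ₂ Z m 0 ^ (1 + (8:ℝ)/(n:ℝ))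
          ≤ (((1 - (2:ℝ)^(-θ₂))⁻¹ + 1) * η)^((8:ℝ)/(n:ℝ))
            * (C * (2:ℝ)^(-(m:ℝ)/4) * (1 - (2:ℝ)^(-(θ₂ - 1/4)))⁻¹) :=
        rpow_one_add_le hD2nn hD2s hD2d hppos.le
      calc dsum θ₂ Z m 0 ^ (1 + (8:ℝ)/(n:ℝ)) ≤ _ := h1
        _ = ((1 - (2:ℝ)^(-(θ₂ - 1/4)))⁻¹
              * (((1 - (2:ℝ)^(-θ₂))⁻¹ + 1) * η)^((8:ℝ)/(n:ℝ))) * W := by rw [hWdef]; ring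
        _ ≤ q * W := mul_le_mul_of_nonneg_right hqc' hWnn
    -- term 4
    have hD3nn := dsum_nonneg hZnn 1 m 3
    have hT4f : dsum 1 Z m 3 ^ (1 + (4:ℝ)/3) ≤ q * W := by
      have h1 : dsum 1 Z m 3 ^ (1 + (4:ℝ)/3)
          ≤ (((1 - (2:ℝ)^(-(1:ℝ)))⁻¹ + 1) * η)^((4:ℝ)/3)
            * (C * (2:ℝ)^(-(m:ℝ)/4) * (1 - (2:ℝ)^(-((1:ℝ) - 1/4)))⁻¹) :=
        rpow_one_add_le hD3nn hD3s hD3d (by norm_num)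
      calc dsum 1 Z m 3 ^ (1 + (4:ℝ)/3) ≤ _ := h1
        _ = ((1 - (2:ℝ)^(-((1:ℝ) - 1/4)))⁻¹
              * (((1 - (2:ℝ)^(-(1:ℝ)))⁻¹ + 1) * η)^((4:ℝ)/3)) * W := by rw [hWdef]; ring
        _ ≤ q * W := mul_le_mul_of_nonneg_right hqd' hWnn
    -- nonlinear estimate
    have hnl : nlRHS n Z m ≤ 4 * (q * W) := by
      have hexp3 : ((n:ℝ)+8)/(n:ℝ) = 1 + (8:ℝ)/(n:ℝ) := by field_simp
      have hexp4 : (7:ℝ)/3 = 1 + (4:ℝ)/3 := by norm_num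
      rw [nlRHS, ← hθ₁def, ← hθ₂def, hexp3, hexp4]
      linarith
    have hNb : N m ≤ cn * (4 * (q * W)) :=
      (hNLf m (by omega)).trans (mul_le_mul_of_nonneg_left hnl hcn.le)
    -- linear step
    have hlink := hlinf k
    rw [← hm] at hlink
    have hk0 : (0:ℝ) ≤ (k:ℝ) := by exact_mod_cast (by omega : (0:ℤ) ≤ k)
    have h2half : (2:ℝ)^(-(k:ℝ)/2) ≤ (2:ℝ)^(-(k:ℝ)/4) :=
      (Real.rpow_le_rpow_left_iff one_lt_two).mpr (by linarith)
    have hWk : W = C * ((2:ℝ)^((1:ℝ)/4) * (2:ℝ)^(-(k:ℝ)/4)) := by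
      rw [hWdef, ← Real.rpow_add two_pos]
      congr 1
      rw [hm]; push_cast; ring
    have h214 : (2:ℝ)^((1:ℝ)/4) ≤ 2 := by
      calc (2:ℝ)^((1:ℝ)/4) ≤ (2:ℝ)^(1:ℝ) :=
            (Real.rpow_le_rpow_left_iff one_lt_two).mpr (by norm_num)
        _ = 2 := Real.rpow_one 2
    have hNm : cl * N m ≤ (C/2) * (2:ℝ)^(-(k:ℝ)/4) := by
      have h1 : cl * N m ≤ cl * (cn * (4 * (q * W))) := mul_le_mul_of_nonneg_left hNb hcl.le
      have h2 : cl * (cn * (4 * (q * W))) = (1/4) * W := by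
        rw [hqdef]; field_simp; ring
      have h3 : (1/4) * W ≤ (1/4) * (C * (2 * (2:ℝ)^(-(k:ℝ)/4))) := by
        rw [hWk]
        have h5 : (2:ℝ)^((1:ℝ)/4) * (2:ℝ)^(-(k:ℝ)/4) ≤ 2 * (2:ℝ)^(-(k:ℝ)/4) :=
          mul_le_mul_of_nonneg_right h214 (two_rpow_pos _).le
        exact mul_le_mul_of_nonneg_left (mul_le_mul_of_nonneg_left h5 hCpos.le)
          (by norm_num : (0:ℝ) ≤ 1/4)
      have h4 : (1/4) * (C * (2 * (2:ℝ)^(-(k:ℝ)/4))) = (C/2) * (2:ℝ)^(-(k:ℝ)/4) := by ring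
      linarith
    have hclC : cl ≤ C/2 := by
      have := le_max_right (cb * (2:ℝ)^((K₁:ℝ)/4)) (2*cl)
      rw [hCdef]; linarith
    have hfirst : cl * (2:ℝ)^(-(k:ℝ)/2) ≤ (C/2) * (2:ℝ)^(-(k:ℝ)/4) :=
      mul_le_mul hclC h2half (two_rpow_pos _).le (by linarith)
    calc Z k ≤ cl * ((2:ℝ)^(-(k:ℝ)/2) + N m) := hlink
      _ = cl * (2:ℝ)^(-(k:ℝ)/2) + cl * N m := by ring
      _ ≤ (C/2) * (2:ℝ)^(-(k:ℝ)/4) + (C/2) * (2:ℝ)^(-(k:ℝ)/4) := add_le_add hfirst hNm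
      _ = C * (2:ℝ)^(-(k:ℝ)/4) := by ring
  refine ⟨C, hCpos, fun k => ?_⟩
  have main : ∀ d : ℕ, ∀ k : ℤ, k ≤ K₁ + d → Z k ≤ C * (2:ℝ)^(-(k:ℝ)/4) := by
    intro d
    induction d with
    | zero => intro k hk; exact hbase k (by omega)
    | succ d ih =>
      intro k hk
      rcases le_or_gt k (K₁ + d) with h | h
      · exact ih k h
      · exact hstep k (by omega) (fun j hj => ih j (by omega))
  exact main (k - K₁).toNat k (by omega)


end FourthNLS
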